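/- The kernel K(x,y) = α_y(h(x⁻¹y)) associated to the graph product multiplier h = ⋆_Γ h_v is *-symmetric: K(x,y) = K(y,x)* for all x,y ∈ ⋆_Γ G_v. -/

import Mathlib

open scoped Matrix

/-- Positivity of a matrix over a C*-algebra: `M = Bᴴ * B` for some `B`. -/
def MatPos {n : ℕ} {A : Type*} [Ring A] [StarRing A]
    (M : Matrix (Fin n) (Fin n) A) : Prop :=
  ∃ B : Matrix (Fin n) (Fin n) A, M = Bᴴ * B

/-- A positive definite multiplier for an action `α : G →* Aut(A)`. -/
def IsPDMultiplier {G : Type*} [Group G] {A : Type*} [CStarAlgebra A]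
    (α : G →* (A ≃ₐ[ℂ] A)) (h : G → A) : Prop :=
  (∀ s : G, h s ∈ Set.center A) ∧
  ∀ (n : ℕ) (x : Fin n → G),
    MatPos (Matrix.of fun i j => α (x j) (h ((x i)⁻¹ * x j)))

/-- The commutators defining the graph product of groups. -/
def graphRels {V : Type*} (E : V → V → Prop) (G : V → Type*) [∀ v, Group (G v)] :
    Set (Monoid.CoprodI G) :=
  {x | ∃ (v w : V) (_ : E v w) (g : G v) (k : G w),
    x = Monoid.CoprodI.of g * Monoid.CoprodI.of k *
      (Monoid.CoprodI.of g)⁻¹ * (Monoid.CoprodI.of k)⁻¹}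

/-- The graph product of the groups `G v` over the graph `(V, E)`: the free
product modulo commutation of adjacent vertex groups. -/
def GraphProduct {V : Type*} (E : V → V → Prop) (G : V → Type*)
    [∀ v, Group (G v)] : Type _ :=
  Monoid.CoprodI G ⧸ Subgroup.normalClosure (graphRels E G)

instance {V : Type*} (E : V → V → Prop) (G : V → Type*) [∀ v, Group (G v)] :
    Group (GraphProduct E G) :=
  QuotientGroup.Quotient.group _

/-- The canonical map of a vertex group into the graph product. -/
def GraphProduct.of {V : Type*} (E : V → V → Prop) {G : V → Type*}
    [∀ v, Group (G v)] {v : V} (g : G v) : GraphProduct E G :=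
  QuotientGroup.mk (Monoid.CoprodI.of g)

/-- The element of the graph product given by a word of vertex-group letters. -/
def wordProd {V : Type*} (E : V → V → Prop) {G : V → Type*} [∀ v, Group (G v)]
    (l : List (Σ v, G v)) : GraphProduct E G :=
  (l.map fun p => GraphProduct.of E p.2).prod

/-- A vertex word is reduced if whenever two letters agree, some letter strictly
between them is not joined to them by an edge. -/
def VReduced {V : Type*} (E : V → V → Prop) (l : List V) : Prop :=
  ∀ k m : Fin l.length, (k : ℕ) < m → l.get k = l.get m →
    ∃ p : Fin l.length, (k : ℕ) < p ∧ (p : ℕ) < m ∧ ¬ E (l.get k) (l.get p)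

/-- A word of vertex-group letters is reduced if all letters are nontrivial and
its underlying vertex word is reduced. -/
def GReduced {V : Type*} (E : V → V → Prop) {G : V → Type*} [∀ v, Group (G v)]
    (l : List (Σ v, G v)) : Prop :=
  (∀ p ∈ l, p.2 ≠ 1) ∧ VReduced E (l.map Sigma.fst)

/-- The value of the graph product multiplier `⋆_Γ h_v` on a reduced word
`s₁ ⋯ sₙ`: the ordered product `∏_j α((s_{j+1}⋯sₙ)⁻¹)(h_{v_j}(s_j))`. -/
def hWord {V : Type*} (E : V → V → Prop) {G : V → Type*} [∀ v, Group (G v)]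
    {A : Type*} [CStarAlgebra A]
    (α : GraphProduct E G →* (A ≃ₐ[ℂ] A)) (hv : ∀ v, G v → A) :
    List (Σ v, G v) → A
  | [] => 1
  | p :: l => α ((wordProd E l)⁻¹) (hv p.1 p.2) * hWord E α hv l

section Aux
variable {V : Type*} {E : V → V → Prop} {G : V → Type*} [∀ v, Group (G v)]

lemma wordProd_nil : wordProd E ([] : List (Σ v, G v)) = 1 := rfl

lemma wordProd_cons (p : Σ v, G v) (l : List (Σ v, G v)) :
    wordProd E (p :: l) = GraphProduct.of E p.2 * wordProd E l := by
  simp [wordProd]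

lemma wordProd_append (a b : List (Σ v, G v)) :
    wordProd E (a ++ b) = wordProd E a * wordProd E b := by
  simp [wordProd]

lemma of_one (v : V) : GraphProduct.of E (1 : G v) = 1 := by
  simp [GraphProduct.of]
  rfl

lemma of_mul {v : V} (g k : G v) :
    GraphProduct.of E (g * k) = GraphProduct.of E g * GraphProduct.of E k := by
  simp only [GraphProduct.of, map_mul]
  rfl

lemma of_inv {v : V} (g : G v) :
    GraphProduct.of E g⁻¹ = (GraphProduct.of E g)⁻¹ := by
  simp only [GraphProduct.of, map_inv]
  rfl

lemma of_comm {v w : V} (hE : E v w) (g : G v) (k : G w) :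
    GraphProduct.of E g * GraphProduct.of E k
      = GraphProduct.of E k * GraphProduct.of E g := by
  have h1 : (QuotientGroup.mk (Monoid.CoprodI.of g * Monoid.CoprodI.of k *
      (Monoid.CoprodI.of g)⁻¹ * (Monoid.CoprodI.of k)⁻¹) : GraphProduct E G) = 1 := by
    rw [QuotientGroup.eq_one_iff]
    exact Subgroup.subset_normalClosure ⟨v, w, hE, g, k, rfl⟩
  rw [QuotientGroup.mk_mul, QuotientGroup.mk_mul, QuotientGroup.mk_mul,
    QuotientGroup.mk_inv, QuotientGroup.mk_inv] at h1
  have h2 : GraphProduct.of E g * GraphProduct.of E k * (GraphProduct.of E g)⁻¹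
      * (GraphProduct.of E k)⁻¹ = 1 := h1
  rw [mul_inv_eq_one] at h2
  rw [mul_inv_eq_iff_eq_mul] at h2
  exact h2

lemma wordProd_comm {v : V} (g : G v)
    (b : List (Σ v, G v)) (hb : ∀ q ∈ b, E v q.1) :
    GraphProduct.of E g * wordProd E b = wordProd E b * GraphProduct.of E g := by
  induction b with
  | nil => simp [wordProd_nil]
  | cons q t ih =>
    rw [wordProd_cons, ← mul_assoc, of_comm (hb q (List.mem_cons_self)) g q.2,
      mul_assoc, ih (fun r hr => hb r (List.mem_cons_of_mem q hr)), mul_assoc]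

lemma exists_word (x : GraphProduct E G) : ∃ l, wordProd E l = x := by
  obtain ⟨w, rfl⟩ := QuotientGroup.mk_surjective x
  induction w using Monoid.CoprodI.induction_on with
  | one => exact ⟨[], rfl⟩
  | of i g => exact ⟨[⟨i, g⟩], by show GraphProduct.of E g * 1 = _; exact mul_one _⟩
  | mul a b iha ihb =>
    obtain ⟨l1, h1⟩ := iha
    obtain ⟨l2, h2⟩ := ihb
    exact ⟨l1 ++ l2, by rw [wordProd_append, h1, h2]; rfl⟩

lemma exists_reduced (hsymm : Symmetric E) :
    ∀ (n : ℕ) (l : List (Σ v, G v)), l.length ≤ n →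
      ∃ m, GReduced E m ∧ wordProd E m = wordProd E l := by
  intro n
  induction n with
  | zero =>
    intro l hl
    rw [List.length_eq_zero_iff.mp (Nat.le_zero.mp hl)]
    refine ⟨[], ⟨by simp, ?_⟩, rfl⟩
    intro k m
    exact absurd k.2 (by simp)
  | succ n ih =>
    intro l hl
    by_cases h1 : ∃ p ∈ l, p.2 = 1
    · obtain ⟨p, hp, hp1⟩ := h1
      obtain ⟨a, b, rfl⟩ := List.append_of_mem hp
      obtain ⟨m, hm, hwp⟩ := ih (a ++ b) (by simp at hl ⊢; omega)
      refine ⟨m, hm, ?_⟩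
      rw [hwp, wordProd_append, wordProd_append, wordProd_cons, hp1, of_one, one_mul]
    · by_cases h2 : VReduced E (l.map Sigma.fst)
      · exact ⟨l, ⟨fun p hp c => h1 ⟨p, hp, c⟩, h2⟩, rfl⟩
      · unfold VReduced at h2
        push_neg at h2
        obtain ⟨k, m, hkm, heq, hbet⟩ := h2
        have hlen : (l.map Sigma.fst).length = l.length := by simp
        have hk : (k : ℕ) < l.length := by have := k.2; omega
        have hm : (m : ℕ) < l.length := by have := m.2; omega
        have hfst : (l[(k:ℕ)]).1 = (l[(m:ℕ)]).1 := by
          simpa [List.get_eq_getElem, List.getElem_map] using heq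
        rcases hx : l[(k:ℕ)] with ⟨v, g⟩
        rcases hy : l[(m:ℕ)] with ⟨w, kk⟩
        rw [hx, hy] at hfst
        dsimp only at hfst
        subst hfst
        set a := l.take (k:ℕ) with ha
        set b := (l.drop ((k:ℕ)+1)).take ((m:ℕ) - (k:ℕ) - 1) with hbdef
        set c := l.drop ((m:ℕ)+1) with hc
        have hdec : l = a ++ ⟨v, g⟩ :: (b ++ ⟨v, kk⟩ :: c) := by
          conv_lhs => rw [← List.take_append_drop (k:ℕ) l]
          rw [List.drop_eq_getElem_cons hk, hx]
          congr 1
          congr 1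
          conv_lhs => rw [← List.take_append_drop ((m:ℕ) - (k:ℕ) - 1) (l.drop ((k:ℕ)+1))]
          congr 1
          rw [List.drop_drop]
          have h3 : (k:ℕ) + 1 + ((m:ℕ) - (k:ℕ) - 1) = (m:ℕ) := by omega
          rw [h3, List.drop_eq_getElem_cons hm, hy]
        have hEb : ∀ q ∈ b, E v q.1 := by
          intro q hq
          obtain ⟨j, hj, hjq⟩ := List.mem_iff_getElem.mp hq
          have hjlen : j < (m:ℕ) - (k:ℕ) - 1 := by
            rw [hbdef] at hj; simp at hj; omega
          have hidx : (k:ℕ)+1+j < l.length := by omega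
          have hb_j : b[j] = l[(k:ℕ)+1+j] := by
            simp only [hbdef, List.getElem_take, List.getElem_drop]
          have hE := hbet ⟨(k:ℕ)+1+j, by omega⟩ (by simp; omega) (by simp; omega)
          simp only [List.get_eq_getElem, List.getElem_map] at hE
          rw [hx] at hE
          rw [← hjq, hb_j]
          exact hE
        have hcomm : GraphProduct.of E kk * wordProd E b
            = wordProd E b * GraphProduct.of E kk := wordProd_comm kk b hEb
        obtain ⟨r, hr, hwr⟩ := ih (a ++ ⟨v, g * kk⟩ :: (b ++ c)) (by
          have hle := congrArg List.length hdec
          simp only [List.length_append, List.length_cons] at hle ⊢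
          omega)
        refine ⟨r, hr, ?_⟩
        rw [hwr]
        conv_rhs => rw [hdec]
        simp only [wordProd_append, wordProd_cons, of_mul, mul_assoc]
        have h4 : GraphProduct.of E kk * (wordProd E b * wordProd E c)
            = wordProd E b * (GraphProduct.of E kk * wordProd E c) := by
          rw [← mul_assoc, hcomm, mul_assoc]
        rw [h4]

def revInv (l : List (Σ v, G v)) : List (Σ v, G v) :=
  (l.map fun p => ⟨p.1, p.2⁻¹⟩).reverse

lemma revInv_nil : revInv ([] : List (Σ v, G v)) = [] := rfl

lemma revInv_cons (p : Σ v, G v) (l : List (Σ v, G v)) :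
    revInv (p :: l) = revInv l ++ [⟨p.1, p.2⁻¹⟩] := by
  simp [revInv]

lemma wordProd_revInv (l : List (Σ v, G v)) :
    wordProd E (revInv l) = (wordProd E l)⁻¹ := by
  induction l with
  | nil => simp [revInv_nil, wordProd_nil]
  | cons p t ih =>
    rw [revInv_cons, wordProd_append, ih, wordProd_cons p t, mul_inv_rev]
    simp [wordProd_cons, wordProd_nil, of_inv]

lemma VReduced_reverse {L : List V} (h : VReduced E L) : VReduced E L.reverse := by
  intro k m hkm heq
  have hn : L.reverse.length = L.length := by simp
  have hk : (k : ℕ) < L.length := by have := k.2; omega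
  have hm : (m : ℕ) < L.length := by have := m.2; omega
  have hk' : L.length - 1 - (m:ℕ) < L.length := by omega
  have hm' : L.length - 1 - (k:ℕ) < L.length := by omega
  have hgr : ∀ (i : Fin L.reverse.length),
      L.reverse.get i = L[L.length - 1 - (i:ℕ)]'(by have := i.2; omega) := by
    intro i
    simp only [List.get_eq_getElem, List.getElem_reverse]
  have heq' : L[L.length - 1 - (m:ℕ)]'hk' = L[L.length - 1 - (k:ℕ)]'hm' := by
    rw [hgr k, hgr m] at heq
    exact heq.symm
  obtain ⟨p, hp1, hp2, hp3⟩ := h ⟨L.length - 1 - (m:ℕ), hk'⟩ ⟨L.length - 1 - (k:ℕ), hm'⟩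
    (by simp; omega) (by simpa using heq')
  have hp : (p : ℕ) < L.length := p.2
  have hp1' : L.length - 1 - (m:ℕ) < (p:ℕ) := hp1
  have hp2' : (p:ℕ) < L.length - 1 - (k:ℕ) := hp2
  refine ⟨⟨L.length - 1 - (p:ℕ), by omega⟩, by simp; omega, by simp; omega, ?_⟩
  rw [hgr, hgr]
  simp only [List.get_eq_getElem] at hp3 heq'
  have e1 : L.length - 1 - (L.length - 1 - (p:ℕ)) = (p:ℕ) := by omega
  have e2 : (k:ℕ) = L.length - 1 - (L.length - 1 - (k:ℕ)) := by omega
  simp only [e1]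
  intro hc
  apply hp3
  rw [heq']
  convert hc using 2

lemma GReduced_revInv {l : List (Σ v, G v)} (h : GReduced E l) :
    GReduced E (revInv l) := by
  constructor
  · intro p hp
    simp only [revInv, List.mem_reverse, List.mem_map] at hp
    obtain ⟨q, hq, rfl⟩ := hp
    simpa using fun c => h.1 q hq (by simpa using c)
  · have : (revInv l).map Sigma.fst = (l.map Sigma.fst).reverse := by
      simp [revInv, List.map_reverse, Function.comp]
    rw [this]
    exact VReduced_reverse h.2

section Hw
variable {A : Type*} [CStarAlgebra A]
variable (α : GraphProduct E G →* (A ≃ₐ[ℂ] A)) (hv : ∀ v, G v → A)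

lemma alpha_mul_apply (s t : GraphProduct E G) (x : A) :
    α (s * t) x = α s (α t x) := by
  rw [map_mul, AlgEquiv.mul_apply]

lemma hWord_append (a b : List (Σ v, G v)) :
    hWord E α hv (a ++ b)
      = α ((wordProd E b)⁻¹) (hWord E α hv a) * hWord E α hv b := by
  induction a with
  | nil => simp [hWord]
  | cons p a ih =>
    show α ((wordProd E (a ++ b))⁻¹) (hv p.1 p.2) * hWord E α hv (a ++ b) = _
    rw [ih, wordProd_append, mul_inv_rev, alpha_mul_apply]
    show _ = α ((wordProd E b)⁻¹)
        (α ((wordProd E a)⁻¹) (hv p.1 p.2) * hWord E α hv a) * hWord E α hv b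
    rw [map_mul, mul_assoc]

lemma hWord_single (p : Σ v, G v) :
    hWord E α hv [p] = hv p.1 p.2 := by
  show α ((wordProd E [])⁻¹) (hv p.1 p.2) * hWord E α hv [] = _
  simp [wordProd_nil, hWord]

lemma key_star
    (hstar : ∀ (s : GraphProduct E G) (a : A), α s (star a) = star (α s a))
    (hsv : ∀ (v : V) (g : G v),
      star (hv v g) = α (GraphProduct.of E g⁻¹) (hv v g⁻¹)) :
    ∀ l : List (Σ v, G v),
      α (wordProd E l) (hWord E α hv l) = star (hWord E α hv (revInv l)) := by
  intro l
  induction l with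
  | nil => simp [revInv_nil, hWord, wordProd_nil]
  | cons p t ih =>
    rw [revInv_cons, hWord_append, hWord_single]
    have h1 : (wordProd E [(⟨p.1, p.2⁻¹⟩ : Σ v, G v)])⁻¹ = GraphProduct.of E p.2 := by
      rw [wordProd_cons, wordProd_nil, mul_one]
      show (GraphProduct.of E p.2⁻¹)⁻¹ = _
      rw [of_inv, inv_inv]
    rw [h1, star_mul, ← hstar]
    have h2 : star (hv p.1 p.2⁻¹) = α (GraphProduct.of E p.2) (hv p.1 p.2) := by
      have := hsv p.1 p.2⁻¹
      rwa [inv_inv] at this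
    rw [h2, ← ih, ← map_mul]
    rw [wordProd_cons]
    show α (GraphProduct.of E p.2 * wordProd E t)
        (α ((wordProd E t)⁻¹) (hv p.1 p.2) * hWord E α hv t) = _
    rw [map_mul, ← alpha_mul_apply, mul_inv_cancel_right, alpha_mul_apply, map_mul]

end Hw
end Aux
/-- The kernel `K(x,y) = α_y(h(x⁻¹y))` associated to the graph product multiplier
is `*`-symmetric: `K(x,y) = K(y,x)*`. -/
theorem stmt12
    {V : Type*} (E : V → V → Prop) {G : V → Type*} [∀ v, Group (G v)]
    {A : Type*} [CStarAlgebra A]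
    -- `Γ` is a simplicial graph
    (hsymm : Symmetric E) (hirr : ∀ v, ¬ E v v)
    -- the vertex actions and the graph product action
    (αv : ∀ v, G v →* (A ≃ₐ[ℂ] A))
    (α : GraphProduct E G →* (A ≃ₐ[ℂ] A))
    (hα : ∀ (v : V) (g : G v), α (GraphProduct.of E g) = αv v g)
    (hstar : ∀ (s : GraphProduct E G) (a : A), α s (star a) = star (α s a))
    -- the actions commute according to `Γ`
    (hacomm : ∀ v w, E v w → ∀ (g : G v) (k : G w) (a : A),
      αv v g (αv w k a) = αv w k (αv v g a))
    -- the vertex multipliers: unital positive definite, commuting according to `Γ`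
    (hv : ∀ v, G v → A)
    (hpd : ∀ v, IsPDMultiplier (αv v) (hv v))
    (huni : ∀ v, hv v 1 = 1)
    (hmcomm : ∀ v w, E v w → ∀ (g : G v) (b : G w), αv v g (hv w b) = hv w b)
    -- `h` is the graph product multiplier `⋆_Γ h_v`
    (h : GraphProduct E G → A)
    (hred : ∀ l : List (Σ v, G v), GReduced E l → h (wordProd E l) = hWord E α hv l)
    -- the associated kernel
    (K : GraphProduct E G → GraphProduct E G → A)
    (hK : ∀ x y : GraphProduct E G, K x y = α y (h (x⁻¹ * y)))
    (x y : GraphProduct E G) :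
    K x y = star (K y x) := by
  have hsv : ∀ (v : V) (g : G v),
      star (hv v g) = α (GraphProduct.of E g⁻¹) (hv v g⁻¹) := by
    have step : ∀ (v : V) (g : G v), (αv v g) (hv v g) = star (hv v g⁻¹) := by
      intro v g
      obtain ⟨B, hB⟩ := (hpd v).2 2 ![1, g]
      have hherm : (Bᴴ * B)ᴴ = Bᴴ * B := by
        rw [Matrix.conjTranspose_mul, Matrix.conjTranspose_conjTranspose]
      have e : star ((Matrix.of fun i j =>
          (αv v) (![1, g] j) (hv v ((![1, g] i)⁻¹ * ![1, g] j))) 1 0)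
          = (Matrix.of fun i j =>
          (αv v) (![1, g] j) (hv v ((![1, g] i)⁻¹ * ![1, g] j))) 0 1 := by
        rw [← Matrix.conjTranspose_apply, hB, hherm, ← hB]
      simp only [Matrix.of_apply, Matrix.cons_val_zero, Matrix.cons_val_one,
        Matrix.head_cons, map_one, AlgEquiv.one_apply, inv_one, one_mul,
        mul_one, inv_inv] at e
      exact e.symm
    intro v g
    have hs := step v g⁻¹
    rw [inv_inv] at hs
    rw [hα]
    exact hs.symm
  obtain ⟨l0, hl0⟩ := exists_word (x⁻¹ * y)
  obtain ⟨l, hlred, hl⟩ := exists_reduced hsymm l0.length l0 le_rfl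
  have hgl : wordProd E l = x⁻¹ * y := hl.trans hl0
  have hinv : wordProd E (revInv l) = (x⁻¹ * y)⁻¹ := by rw [wordProd_revInv, hgl]
  have h2 : h ((x⁻¹ * y)⁻¹) = hWord E α hv (revInv l) := by
    rw [← hinv]; exact hred _ (GReduced_revInv hlred)
  have h1 : h (x⁻¹ * y) = hWord E α hv l := by rw [← hgl]; exact hred l hlred
  have hkey := key_star α hv hstar hsv l
  rw [hK, hK]
  have e1 : y⁻¹ * x = (x⁻¹ * y)⁻¹ := by group
  rw [e1, h2, ← hstar, ← hkey, hgl, h1, ← alpha_mul_apply, mul_inv_cancel_left]
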